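/- arXiv:math/0701477 — 8 statements merged into one kernel-verified Lean document; each statement's English description precedes it below -/
import Mathlib

section
/- Every commutative bilinear multiplication on ℝ² satisfying the Jordan identity (x∘x)∘(x∘y) = x∘((x∘x)∘y) with no nonzero isotropic vector (i.e. x∘x ≠ 0 for all x ≠ 0) admits a multiplicative identity element. -/
def JordanLaw (φ : ℝ × ℝ → ℝ × ℝ → ℝ × ℝ) : Prop :=
  ∀ x y, φ (φ x x) (φ x y) = φ x (φ (φ x x) y)

def BilinLaw (φ : ℝ × ℝ → ℝ × ℝ → ℝ × ℝ) : Prop :=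
  (∀ (a : ℝ) x y z, φ (a • x + y) z = a • φ x z + φ y z) ∧
  (∀ (a : ℝ) x y z, φ x (a • y + z) = a • φ x y + φ x z)

def SymmLaw (φ : ℝ × ℝ → ℝ × ℝ → ℝ × ℝ) : Prop := ∀ x y, φ x y = φ y x

/-!
Squaring is a quadratic map on ℝ², so `det (v, v ∘ v)` is a binary cubic form; it has a real zero,
and anisotropy rescales that `v` into an idempotent `e`. The linearized Jordan identity gives the
Peirce relation `L (L - 1) (2L - 1) = 0` for `L = e ∘ _`. If `L ≠ 1`, there is an eigenvector `w`
of `L` with eigenvalue `0` or `1/2`, and `e, w` is a basis. For eigenvalue `0`, the linearized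
identity kills the `e`-component of `w ∘ w`, so `w ∘ w = β w` with `β ≠ 0`, and `e + β⁻¹ w` is
the identity. For eigenvalue `1/2`, the Jordan identity at `(w, w)` and its linearization at
`(w, e, e)` kill both components of `w ∘ w`, contradicting anisotropy.
-/

open Module

structure IsJordanMul {K V : Type*} [CommRing K] [AddCommGroup V] [Module K V]
    (B : V →ₗ[K] V →ₗ[K] V) : Prop where
  comm : ∀ x y, B x y = B y x
  jordan : ∀ x y, B (B x x) (B x y) = B x (B (B x x) y)

section LinearAlgebra

variable {K V : Type*} [Field K] [AddCommGroup V] [Module K V]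

theorem Module.End.linearIndependent_pair_of_eigenvectors {f : End K V} {x y : V} {a b : K}
    (hab : a ≠ b) (hx0 : x ≠ 0) (hy0 : y ≠ 0) (hx : f x = a • x) (hy : f y = b • y) :
    LinearIndependent K ![x, y] := by
  refine f.eigenvectors_linearIndependent' ![a, b] ?_ ![x, y] fun i ↦ ?_
  · intro i j hij
    fin_cases i <;> fin_cases j <;> simp_all [eq_comm]
  · fin_cases i <;> simp [End.hasEigenvector_iff, hx0, hy0, hx, hy]

theorem LinearIndependent.exists_smul_add_smul_eq (hV : finrank K V = 2) {x y : V}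
    (h : LinearIndependent K ![x, y]) (z : V) : ∃ a b : K, a • x + b • y = z := by
  have hspan := h.span_eq_top_of_card_eq_finrank (by simp [hV])
  rw [Matrix.range_cons_cons_empty] at hspan
  exact Submodule.mem_span_pair.mp (hspan ▸ Submodule.mem_top)

theorem exists_idempotent_of_mul_self_eq_smul (B : V →ₗ[K] V →ₗ[K] V) {v : V} {c : K}
    (hv : B v v = c • v) (hv0 : B v v ≠ 0) : ∃ e, e ≠ 0 ∧ B e e = e := by
  have hc : c ≠ 0 := by rintro rfl; simp_all
  refine ⟨c⁻¹ • v, smul_ne_zero (inv_ne_zero hc) (by rintro rfl; simp_all), ?_⟩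
  simp only [map_smul, LinearMap.smul_apply, hv, smul_smul]
  congr 1
  field_simp

end LinearAlgebra

namespace IsJordanMul

variable {K V : Type*} [Field K] [CharZero K] [AddCommGroup V] [Module K V]
  {B : V →ₗ[K] V →ₗ[K] V}

theorem jordan_linearized (hB : IsJordanMul B) (x y z : V) :
    (2 : K) • B (B x z) (B x y) + B (B x x) (B z y) =
      B z (B (B x x) y) + (2 : K) • B x (B (B x z) y) := by
  have hp := hB.jordan (x + z) y
  have hm := hB.jordan (x - z) y
  have hz := hB.jordan z y
  simp only [map_add, map_sub, LinearMap.add_apply, LinearMap.sub_apply, hB.comm z x] at hp hm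
  have h2 : (2 : K) • ((2 : K) • B (B x z) (B x y) + B (B x x) (B z y) -
      (B z (B (B x x) y) + (2 : K) • B x (B (B x z) y))) = 0 := by
    linear_combination (norm := module) hp - hm - (2 : K) • hz
  rw [smul_eq_zero, sub_eq_zero] at h2
  exact h2.resolve_left two_ne_zero

theorem peirce (hB : IsJordanMul B) {e : V} (he : B e e = e) (z : V) :
    B e z + (2 : K) • B e (B e (B e z)) = (3 : K) • B e (B e z) := by
  have h := hB.jordan_linearized e e z
  simp only [he] at h
  rw [hB.comm (B e z) e, hB.comm z e] at h
  linear_combination (norm := module) -h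

theorem exists_unit_of_peirce_zero (hB : IsJordanMul B) (hV : finrank K V = 2)
    (haniso : ∀ x, x ≠ 0 → B x x ≠ 0) {e w : V} (he0 : e ≠ 0) (he : B e e = e) (hw0 : w ≠ 0)
    (hw : B e w = 0) : ∃ u, ∀ x, B u x = x := by
  have hind := End.linearIndependent_pair_of_eigenvectors (f := B e) one_ne_zero he0 hw0
    (by rw [he, one_smul]) (by rw [hw, zero_smul])
  obtain ⟨α, β, hww⟩ := hind.exists_smul_add_smul_eq hV (B w w)
  have hwe : B w e = 0 := hB.comm w e ▸ hw
  have hα : α = 0 := by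
    have h := hB.jordan_linearized e w w
    simp only [hw, he, map_zero, LinearMap.zero_apply, smul_zero, zero_add, add_zero,
      ← hww, map_add, map_smul] at h
    exact (smul_eq_zero.mp h).resolve_right he0
  have hww' : B w w = β • w := by rw [← hww, hα, zero_smul, zero_add]
  have hβ : β ≠ 0 := by
    rintro rfl
    exact haniso w hw0 (by rw [hww', zero_smul])
  refine ⟨e + β⁻¹ • w, fun x ↦ ?_⟩
  obtain ⟨p, q, rfl⟩ := hind.exists_smul_add_smul_eq hV x
  simp only [map_add, map_smul, LinearMap.add_apply, LinearMap.smul_apply, he, hw, hwe, hww',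
    smul_smul, inv_mul_cancel₀ hβ]
  module

theorem eq_zero_of_peirce_half (hB : IsJordanMul B) (hV : finrank K V = 2)
    (haniso : ∀ x, x ≠ 0 → B x x ≠ 0) {e w : V} (he0 : e ≠ 0) (he : B e e = e)
    (hw : B e w = (2⁻¹ : K) • w) : w = 0 := by
  by_contra hw0
  have hind := End.linearIndependent_pair_of_eigenvectors (f := B e)
    (show (1 : K) ≠ 2⁻¹ by norm_num) he0 hw0 (by rw [he, one_smul]) hw
  obtain ⟨α, β, hww⟩ := hind.exists_smul_add_smul_eq hV (B w w)
  have hwe : B w e = (2⁻¹ : K) • w := hB.comm w e ▸ hw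
  have hα : α = 0 := by
    have h := hB.jordan w w
    simp only [← hww, map_add, map_smul, LinearMap.add_apply, LinearMap.smul_apply, he, hw,
      hwe] at h
    have h' : (α ^ 2) • e = 0 := by linear_combination (norm := module) (2 : K) • h
    exact pow_eq_zero_iff two_ne_zero |>.mp ((smul_eq_zero.mp h').resolve_right he0)
  have hβ : β = 0 := by
    have h := hB.jordan_linearized w e e
    simp only [← hww, map_add, map_smul, LinearMap.add_apply, LinearMap.smul_apply, he, hw,
      hwe] at h
    have h' : β • w = 0 := by linear_combination (norm := module) (4 : K) • h
    exact (smul_eq_zero.mp h').resolve_right hw0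
  exact haniso w hw0 (by simp [← hww, hα, hβ])

theorem exists_unit_of_idempotent (hB : IsJordanMul B) (hV : finrank K V = 2)
    (haniso : ∀ x, x ≠ 0 → B x x ≠ 0) {e : V} (he0 : e ≠ 0) (he : B e e = e) :
    ∃ u, ∀ x, B u x = x := by
  by_cases hid : ∀ x, B e x = x
  · exact ⟨e, hid⟩
  obtain ⟨z, hz⟩ := not_forall.mp hid
  -- `L (2L - 1)` kills `B e z - z`, so either `L` kills it or `L` maps it to a `1/2`-eigenvector.
  have hpeirce := hB.peirce he z
  by_cases h0 : B e (B e z - z) = 0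
  · exact hB.exists_unit_of_peirce_zero hV haniso he0 he (sub_ne_zero.mpr hz) h0
  · refine absurd (hB.eq_zero_of_peirce_half hV haniso he0 he ?_) h0
    simp only [map_sub]
    linear_combination (norm := module) (2⁻¹ : K) • hpeirce

end IsJordanMul

theorem Real.exists_monic_cubic_eq_zero (b c d : ℝ) :
    ∃ t : ℝ, t ^ 3 + b * t ^ 2 + c * t + d = 0 := by
  set M := |b| + |c| + |d| + 1
  have hM : 1 ≤ M := le_add_of_nonneg_left (by positivity)
  have hlow : (-M) ^ 3 + b * (-M) ^ 2 + c * (-M) + d ≤ 0 := by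
    nlinarith [le_abs_self b, le_abs_self c, le_abs_self d, neg_abs_le b, neg_abs_le c,
      neg_abs_le d, sq_nonneg (M - 1)]
  have hhigh : 0 ≤ M ^ 3 + b * M ^ 2 + c * M + d := by
    nlinarith [le_abs_self b, le_abs_self c, le_abs_self d, neg_abs_le b, neg_abs_le c,
      neg_abs_le d, sq_nonneg (M - 1)]
  obtain ⟨t, -, ht⟩ := intermediate_value_Icc (by linarith : -M ≤ M)
    (by fun_prop : Continuous fun t : ℝ ↦ t ^ 3 + b * t ^ 2 + c * t + d).continuousOn ⟨hlow, hhigh⟩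
  exact ⟨t, ht⟩

theorem Real.exists_cubic_eq_zero {a : ℝ} (ha : a ≠ 0) (b c d : ℝ) :
    ∃ t : ℝ, a * t ^ 3 + b * t ^ 2 + c * t + d = 0 := by
  obtain ⟨t, ht⟩ := Real.exists_monic_cubic_eq_zero (b / a) (c / a) (d / a)
  refine ⟨t, ?_⟩
  field_simp at ht
  linear_combination ht

theorem exists_mul_self_eq_smul (B : ℝ × ℝ →ₗ[ℝ] ℝ × ℝ →ₗ[ℝ] ℝ × ℝ) :
    ∃ v : ℝ × ℝ, v ≠ 0 ∧ ∃ c : ℝ, B v v = c • v := by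
  set C := B (0, 1) (0, 1) with hC
  by_cases hC1 : C.1 = 0
  · exact ⟨(0, 1), by simp, C.2, Prod.ext (by simp [← hC, hC1]) (by simp [← hC])⟩
  -- `(1, t)` works iff `det ((1, t), B (1, t) (1, t)) = 0`, a cubic in `t` with leading
  -- coefficient `-C.1`.
  set A := B (1, 0) (1, 0)
  set P := B (1, 0) (0, 1) + B (0, 1) (1, 0)
  have hexp : ∀ t : ℝ, B (1, t) (1, t) = A + t • P + t ^ 2 • C := by
    intro t
    have : ((1 : ℝ), t) = (1, 0) + t • (0, 1) := by ext <;> simp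
    rw [this]
    simp only [map_add, map_smul, LinearMap.add_apply, LinearMap.smul_apply]
    module
  obtain ⟨t, ht⟩ :=
    Real.exists_cubic_eq_zero (neg_ne_zero.mpr hC1) (C.2 - P.1) (P.2 - A.1) A.2
  refine ⟨(1, t), by simp, (B (1, t) (1, t)).1, Prod.ext (by simp) ?_⟩
  rw [hexp]
  simp only [Prod.fst_add, Prod.snd_add, Prod.smul_fst, Prod.smul_snd, smul_eq_mul]
  linear_combination ht

def BilinLaw.toLinearMap₂ {φ : ℝ × ℝ → ℝ × ℝ → ℝ × ℝ} (hb : BilinLaw φ) :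
    ℝ × ℝ →ₗ[ℝ] ℝ × ℝ →ₗ[ℝ] ℝ × ℝ :=
  have zero_left : ∀ z, φ 0 z = 0 := fun z ↦ by simpa using hb.1 (-1) 0 0 z
  have zero_right : ∀ z, φ z 0 = 0 := fun z ↦ by simpa using hb.2 (-1) z 0 0
  LinearMap.mk₂ ℝ φ (fun x y z ↦ by simpa using hb.1 1 x y z)
    (fun a x z ↦ by simpa [zero_left] using hb.1 a x 0 z)
    (fun x y z ↦ by simpa using hb.2 1 x y z)
    (fun a x z ↦ by simpa [zero_right] using hb.2 a x z 0)

theorem stmt_0 (φ : ℝ × ℝ → ℝ × ℝ → ℝ × ℝ)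
    (hb : BilinLaw φ) (hs : SymmLaw φ) (hj : JordanLaw φ)
    (hiso : ∀ x : ℝ × ℝ, x ≠ 0 → φ x x ≠ 0) :
    ∃ e : ℝ × ℝ, ∀ x, φ e x = x := by
  let B := hb.toLinearMap₂
  have hB : IsJordanMul B := ⟨hs, hj⟩
  obtain ⟨v, hv0, c, hv⟩ := exists_mul_self_eq_smul B
  obtain ⟨e, he0, he⟩ := exists_idempotent_of_mul_self_eq_smul B hv (hiso v hv0)
  exact hB.exists_unit_of_idempotent (by simp) hiso he0 he
end

section
/- The complexification of ψ₅ is not simple: the subspace of ℂ² spanned by e₁ + i·e₂ is a nontrivial proper ideal of the complex algebra defined by e₁∘e₁ = e₁, e₂∘e₂ = −e₁, e₁∘e₂ = e₂, even though the real algebra ψ₅ is simple. -/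
/-- ψ₅ over ℂ : e₁∘e₁ = e₁, e₂∘e₂ = −e₁, e₁∘e₂ = e₂. -/
def psi5C (x y : ℂ × ℂ) : ℂ × ℂ := (x.1 * y.1 - x.2 * y.2, x.1 * y.2 + x.2 * y.1)

/-- ψ₅ over ℝ. -/
def psi5 (x y : ℝ × ℝ) : ℝ × ℝ := (x.1 * y.1 - x.2 * y.2, x.1 * y.2 + x.2 * y.1)

/-! The real algebra ψ₅ is `ℂ` viewed as an `ℝ`-algebra, hence a field and simple. Over `ℂ`,
the vector `e₁ + i e₂` is an eigenvector of every left multiplication, so it spans an ideal. -/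

open Complex

lemma psi5C_smul_left (c : ℂ) (v w : ℂ × ℂ) : psi5C (c • v) w = c • psi5C v w := by
  simp only [psi5C, Prod.smul_fst, Prod.smul_snd, Prod.smul_mk, smul_eq_mul]
  congr 1 <;> ring

lemma psi5C_one_I_left (w : ℂ × ℂ) : psi5C (1, I) w = (w.1 - I * w.2) • (1, I) := by
  simp only [psi5C, Prod.smul_mk, smul_eq_mul, Prod.mk.injEq]
  constructor
  · ring
  · linear_combination w.2 * I_sq

lemma psi5C_mem_span_one_I {v : ℂ × ℂ} (hv : v ∈ Submodule.span ℂ {((1 : ℂ), I)})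
    (w : ℂ × ℂ) : psi5C v w ∈ Submodule.span ℂ {((1 : ℂ), I)} := by
  obtain ⟨c, rfl⟩ := Submodule.mem_span_singleton.mp hv
  rw [psi5C_smul_left, psi5C_one_I_left, smul_smul]
  exact Submodule.smul_mem _ _ (Submodule.mem_span_singleton_self _)

lemma one_zero_notMem_span_one_I : ((1 : ℂ), (0 : ℂ)) ∉ Submodule.span ℂ {((1 : ℂ), I)} := by
  rw [Submodule.mem_span_singleton]
  rintro ⟨c, hc⟩
  simp only [Prod.smul_mk, smul_eq_mul, Prod.mk.injEq, mul_one] at hc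
  obtain ⟨rfl, hI⟩ := hc
  simp at hI

lemma psi5_eq_mul (v w : ℝ × ℝ) :
    psi5 v w = equivRealProd (equivRealProd.symm v * equivRealProd.symm w) := by
  simp [psi5, equivRealProd]

lemma exists_psi5_eq {v : ℝ × ℝ} (hv : v ≠ 0) (w : ℝ × ℝ) : ∃ u, psi5 v u = w := by
  have hz : equivRealProd.symm v ≠ 0 := fun h =>
    hv (by simpa [Prod.mk_zero_zero] using congrArg equivRealProd h)
  refine ⟨equivRealProd ((equivRealProd.symm v)⁻¹ * equivRealProd.symm w), ?_⟩
  rw [psi5_eq_mul, Equiv.symm_apply_apply, mul_inv_cancel_left₀ hz, Equiv.apply_symm_apply]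

lemma eq_bot_or_eq_top_of_psi5_mem (I : Submodule ℝ (ℝ × ℝ))
    (hI : ∀ v ∈ I, ∀ w : ℝ × ℝ, psi5 v w ∈ I) : I = ⊥ ∨ I = ⊤ := by
  refine or_iff_not_imp_left.mpr fun hb => eq_top_iff.mpr fun w _ => ?_
  obtain ⟨v, hv, hv0⟩ := Submodule.exists_mem_ne_zero_of_ne_bot hb
  obtain ⟨u, rfl⟩ := exists_psi5_eq hv0 w
  exact hI v hv u

theorem stmt_6 :
    (∀ v ∈ Submodule.span ℂ {((1 : ℂ), Complex.I)}, ∀ w : ℂ × ℂ,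
        psi5C v w ∈ Submodule.span ℂ {((1 : ℂ), Complex.I)}) ∧
    Submodule.span ℂ {((1 : ℂ), Complex.I)} ≠ (⊥ : Submodule ℂ (ℂ × ℂ)) ∧
    Submodule.span ℂ {((1 : ℂ), Complex.I)} ≠ (⊤ : Submodule ℂ (ℂ × ℂ)) ∧
    (∀ I : Submodule ℝ (ℝ × ℝ), (∀ v ∈ I, ∀ w : ℝ × ℝ, psi5 v w ∈ I) →
      I = ⊥ ∨ I = ⊤) := by
  refine ⟨fun v hv w => psi5C_mem_span_one_I hv w, ?_, ?_, eq_bot_or_eq_top_of_psi5_mem⟩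
  · rw [Ne, Submodule.span_singleton_eq_bot]
    simp
  · exact fun h => one_zero_notMem_span_one_I (h ▸ Submodule.mem_top)
end

section
/- Every two-dimensional real Jordan algebra which has a nonzero isotropic vector and a multiplicative identity element is isomorphic to ψ₁, the algebra with e₁∘e₁ = e₁, e₂∘e₂ = 0, e₁∘e₂ = e₂. -/
/-- ψ₁ : e₁∘e₁ = e₁, e₂∘e₂ = 0, e₁∘e₂ = e₂. -/
def psi1 (x y : ℝ × ℝ) : ℝ × ℝ := (x.1 * y.1, x.1 * y.2 + x.2 * y.1)

set_option maxHeartbeats 1000000 in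
theorem stmt_10 (φ : ℝ × ℝ → ℝ × ℝ → ℝ × ℝ)
    (hb : BilinLaw φ) (hs : SymmLaw φ) (hj : JordanLaw φ)
    (hiso : ∃ v : ℝ × ℝ, v ≠ 0 ∧ φ v v = 0)
    (hunit : ∃ e : ℝ × ℝ, ∀ x, φ e x = x) :
    ∃ f : (ℝ × ℝ) ≃ₗ[ℝ] (ℝ × ℝ), ∀ x y, f (φ x y) = psi1 (f x) (f y) := by
  obtain ⟨v, hv0, hvv⟩ := hiso
  obtain ⟨e, he⟩ := hunit
  obtain ⟨hb1, hb2⟩ := hb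
  -- φ 0 z = 0
  have h0 : ∀ z, φ 0 z = 0 := by
    intro z
    simpa using hb1 1 0 0 z
  have hsmul : ∀ (a : ℝ) x z, φ (a • x) z = a • φ x z := by
    intro a x z
    simpa [h0] using hb1 a x 0 z
  have hadd : ∀ x y z, φ (x + y) z = φ x z + φ y z := by
    intro x y z
    simpa using hb1 1 x y z
  -- linear independence of e, v
  have hind : ∀ a b : ℝ, a • e + b • v = 0 → a = 0 ∧ b = 0 := by
    intro a b hab
    have h1 : φ (a • e + b • v) v = a • v := by
      rw [hadd, hsmul, hsmul, he, hvv, smul_zero, add_zero]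
    rw [hab, h0] at h1
    have ha : a = 0 := (smul_eq_zero.mp h1.symm).resolve_right hv0
    refine ⟨ha, ?_⟩
    rw [ha, zero_smul, zero_add] at hab
    exact (smul_eq_zero.mp hab).resolve_right hv0
  set D : ℝ := e.1 * v.2 - e.2 * v.1 with hDdef
  have hD : D ≠ 0 := by
    intro h
    by_cases hv2 : v.2 = 0
    · have hv1 : v.1 ≠ 0 := by
        intro hv1
        exact hv0 (Prod.ext hv1 hv2)
      have key : v.1 • e + (-e.1) • v = (0 : ℝ × ℝ) := by
        refine Prod.ext ?_ ?_
        · show v.1 * e.1 + -e.1 * v.1 = 0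
          ring
        · show v.1 * e.2 + -e.1 * v.2 = 0
          have : e.1 * v.2 - e.2 * v.1 = 0 := h
          nlinarith [this]
      exact hv1 (hind _ _ key).1
    · have key : v.2 • e + (-e.2) • v = (0 : ℝ × ℝ) := by
        refine Prod.ext ?_ ?_
        · show v.2 * e.1 + -e.2 * v.1 = 0
          have : e.1 * v.2 - e.2 * v.1 = 0 := h
          nlinarith [this]
        · show v.2 * e.2 + -e.2 * v.2 = 0
          ring
      exact hv2 (hind _ _ key).1
  -- the coordinate map and its inverse
  set f : ℝ × ℝ → ℝ × ℝ :=
    fun p => (D⁻¹ * (v.2 * p.1 - v.1 * p.2), D⁻¹ * (e.1 * p.2 - e.2 * p.1)) with hf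
  set g : ℝ × ℝ → ℝ × ℝ := fun q => q.1 • e + q.2 • v with hg
  have hgcoord : ∀ q : ℝ × ℝ, g q = (q.1 * e.1 + q.2 * v.1, q.1 * e.2 + q.2 * v.2) := by
    intro q
    refine Prod.ext ?_ ?_ <;> rfl
  have hfg : ∀ q, f (g q) = q := by
    intro q
    rw [hgcoord]
    refine Prod.ext ?_ ?_
    · show D⁻¹ * (v.2 * (q.1 * e.1 + q.2 * v.1) - v.1 * (q.1 * e.2 + q.2 * v.2)) = q.1
      field_simp
      ring
    · show D⁻¹ * (e.1 * (q.1 * e.2 + q.2 * v.2) - e.2 * (q.1 * e.1 + q.2 * v.1)) = q.2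
      field_simp
      ring
  have hgf : ∀ p, g (f p) = p := by
    intro p
    rw [hgcoord]
    refine Prod.ext ?_ ?_
    · show D⁻¹ * (v.2 * p.1 - v.1 * p.2) * e.1 + D⁻¹ * (e.1 * p.2 - e.2 * p.1) * v.1 = p.1
      field_simp
      ring
    · show D⁻¹ * (v.2 * p.1 - v.1 * p.2) * e.2 + D⁻¹ * (e.1 * p.2 - e.2 * p.1) * v.2 = p.2
      field_simp
      ring
  have hmap_add : ∀ p q : ℝ × ℝ, f (p + q) = f p + f q := by
    intro p q
    refine Prod.ext ?_ ?_
    · show D⁻¹ * (v.2 * (p.1 + q.1) - v.1 * (p.2 + q.2)) =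
        D⁻¹ * (v.2 * p.1 - v.1 * p.2) + D⁻¹ * (v.2 * q.1 - v.1 * q.2)
      ring
    · show D⁻¹ * (e.1 * (p.2 + q.2) - e.2 * (p.1 + q.1)) =
        D⁻¹ * (e.1 * p.2 - e.2 * p.1) + D⁻¹ * (e.1 * q.2 - e.2 * q.1)
      ring
  have hmap_smul : ∀ (a : ℝ) (p : ℝ × ℝ), f (a • p) = a • f p := by
    intro a p
    refine Prod.ext ?_ ?_
    · show D⁻¹ * (v.2 * (a * p.1) - v.1 * (a * p.2)) = a * (D⁻¹ * (v.2 * p.1 - v.1 * p.2))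
      ring
    · show D⁻¹ * (e.1 * (a * p.2) - e.2 * (a * p.1)) = a * (D⁻¹ * (e.1 * p.2 - e.2 * p.1))
      ring
  refine ⟨{ toFun := f, invFun := g,
            map_add' := hmap_add, map_smul' := hmap_smul,
            left_inv := hgf, right_inv := hfg }, ?_⟩
  intro x y
  show f (φ x y) = psi1 (f x) (f y)
  have hrep : ∀ p : ℝ × ℝ, p = (f p).1 • e + (f p).2 • v := fun p => (hgf p).symm
  have hmul : ∀ a b c d : ℝ, φ (a • e + b • v) (c • e + d • v)
      = (a * c) • e + (a * d + b * c) • v := by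
    intro a b c d
    have hve : φ v e = v := by rw [hs]; exact he v
    have hvv' : φ v (d • v) = 0 := by
      have h2 := hb2 d v v 0
      have hz : φ v 0 = 0 := by rw [hs]; exact h0 v
      simpa [hvv, hz] using h2
    have hvx : φ v (c • e + d • v) = c • v := by
      rw [hb2, hve, hvv', add_zero]
    rw [hadd, hsmul, hsmul, he, hvx]
    module
  have hfe : ∀ a b : ℝ, f (a • e + b • v) = (a, b) := fun a b => hfg (a, b)
  calc f (φ x y) = f (φ ((f x).1 • e + (f x).2 • v) ((f y).1 • e + (f y).2 • v)) := by
        rw [← hrep, ← hrep]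
    _ = f (((f x).1 * (f y).1) • e + ((f x).1 * (f y).2 + (f x).2 * (f y).1) • v) := by
        rw [hmul]
    _ = psi1 (f x) (f y) := by rw [hfe]; rfl
end

section
/- Let φ be a symmetric bilinear product on ℝ² with e₂∘e₂ = 0, e₁∘e₁ = a₁e₁ + a₂e₂, e₁∘e₂ = c₁e₁ + c₂e₂. Then φ satisfies the Jordan identity if and only if c₁ = 0, a₂c₂² = a₁a₂c₂, and 3a₁c₂² = 2c₂³ + a₁²c₂. -/
/-- The symmetric bilinear product with e₂∘e₂ = 0, e₁∘e₁ = a₁e₁ + a₂e₂,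
e₁∘e₂ = c₁e₁ + c₂e₂. -/
def phi4 (a₁ a₂ c₁ c₂ : ℝ) (x y : ℝ × ℝ) : ℝ × ℝ :=
  (a₁ * (x.1 * y.1) + c₁ * (x.1 * y.2 + x.2 * y.1),
   a₂ * (x.1 * y.1) + c₂ * (x.1 * y.2 + x.2 * y.1))

theorem stmt_12 (a₁ a₂ c₁ c₂ : ℝ) :
    (∀ x y : ℝ × ℝ,
        phi4 a₁ a₂ c₁ c₂ (phi4 a₁ a₂ c₁ c₂ x x) (phi4 a₁ a₂ c₁ c₂ x y) =
          phi4 a₁ a₂ c₁ c₂ x (phi4 a₁ a₂ c₁ c₂ (phi4 a₁ a₂ c₁ c₂ x x) y)) ↔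
      (c₁ = 0 ∧ a₂ * c₂ ^ 2 = a₁ * a₂ * c₂ ∧
        3 * a₁ * c₂ ^ 2 = 2 * c₂ ^ 3 + a₁ ^ 2 * c₂) := by
  constructor
  · intro h
    have h1 := congrArg Prod.fst (h (1,1) (0,1))
    have h2 := congrArg Prod.fst (h (2,1) (0,1))
    have h3 := congrArg Prod.fst (h (1,2) (0,1))
    have g1 := congrArg Prod.snd (h (1,1) (1,0))
    have g2 := congrArg Prod.snd (h (2,1) (1,0))
    have g3 := congrArg Prod.snd (h (1,2) (1,0))
    simp only [phi4] at h1 h2 h3 g1 g2 g3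
    norm_num at h1 h2 h3 g1 g2 g3
    have hc1 : c₁ = 0 := by
      have : c₁ ^ 3 = 0 := by linear_combination h1 - (1/12) * h2 - (1/3) * h3
      exact pow_eq_zero_iff (by norm_num) |>.mp this
    subst hc1
    refine ⟨rfl, ?_, ?_⟩
    · linear_combination 4 * g1 - (1/2) * g2 - g3
    · linear_combination -g1 + g3
  · rintro ⟨rfl, h2, h3⟩
    intro x y
    apply Prod.ext
    · simp only [phi4]; ring
    · simp only [phi4]
      linear_combination x.1 ^ 2 * x.2 * y.1 * h3 - x.1 ^ 3 * y.1 * h2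
end

section
/- For any Jordan algebra laws φ₁, φ₂ on ℝⁿ, the plane spanned by φ₁ and φ₂ consists entirely of Jordan algebra laws (i.e. λφ₁ + μφ₂ satisfies the Jordan identity for all λ, μ ∈ ℝ) if and only if δ_{φ₁}φ₂ = 0 and δ_{φ₂}φ₁ = 0, where δ_{ψ}χ(x,y) = ψ(ψ(x,x),χ(x,y)) + ψ(χ(x,x),ψ(x,y)) + χ(ψ(x,x),ψ(x,y)) − χ(x,ψ(ψ(x,x),y)) − ψ(x,χ(ψ(x,x),y)) − ψ(x,ψ(χ(x,x),y)). -/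
/-! The Jordan associator of `l • φ₁ + m • φ₂` is a cubic form in `(l, m)` whose `l³` and `m³`
coefficients are the associators of `φ₁` and `φ₂`, and whose mixed coefficients are
`δ_{φ₁}φ₂` and `δ_{φ₂}φ₁`. For Jordan laws only the mixed terms survive, and
`l²m • a + lm² • b` vanishes identically iff `a = b = 0` (take `(l, m) = (1, ±1)`). -/

variable (n : ℕ)

def JordanLawN (n : ℕ) (φ : (Fin n → ℝ) → (Fin n → ℝ) → (Fin n → ℝ)) : Prop :=
  ∀ x y, φ (φ x x) (φ x y) = φ x (φ (φ x x) y)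

def BilinLawN (n : ℕ) (φ : (Fin n → ℝ) → (Fin n → ℝ) → (Fin n → ℝ)) : Prop :=
  (∀ (a : ℝ) x y z, φ (a • x + y) z = a • φ x z + φ y z) ∧
  (∀ (a : ℝ) x y z, φ x (a • y + z) = a • φ x y + φ x z)

def SymmLawN (n : ℕ) (φ : (Fin n → ℝ) → (Fin n → ℝ) → (Fin n → ℝ)) : Prop :=
  ∀ x y, φ x y = φ y x

/-- δ_{ψ}χ (x,y) = ψ(ψ(x,x),χ(x,y)) + ψ(χ(x,x),ψ(x,y)) + χ(ψ(x,x),ψ(x,y))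
  − χ(x,ψ(ψ(x,x),y)) − ψ(x,χ(ψ(x,x),y)) − ψ(x,ψ(χ(x,x),y)). -/
def deltaN (n : ℕ) (ψ χ : (Fin n → ℝ) → (Fin n → ℝ) → (Fin n → ℝ))
    (x y : Fin n → ℝ) : Fin n → ℝ :=
  ψ (ψ x x) (χ x y) + ψ (χ x x) (ψ x y) + χ (ψ x x) (ψ x y)
    - χ x (ψ (ψ x x) y) - ψ x (χ (ψ x x) y) - ψ x (ψ (χ x x) y)

theorem forall_smul_add_smul_eq_zero_iff {K M : Type*} [Field K] [NeZero (2 : K)]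
    [AddCommGroup M] [Module K M] (a b : M) :
    (∀ l m : K, (l ^ 2 * m) • a + (l * m ^ 2) • b = 0) ↔ a = 0 ∧ b = 0 := by
  constructor
  · intro h
    have two_smul_a : (2 : K) • a = ((1 ^ 2 * 1 : K) • a + (1 * 1 ^ 2 : K) • b)
        - ((1 ^ 2 * -1 : K) • a + (1 * (-1) ^ 2 : K) • b) := by
      module
    rw [h, h, sub_zero] at two_smul_a
    have ha : a = 0 := (smul_eq_zero.mp two_smul_a).resolve_left two_ne_zero
    exact ⟨ha, by simpa [ha] using h 1 1⟩
  · rintro ⟨rfl, rfl⟩ l m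
    simp

def jordanAssociator {M : Type*} [Sub M] (φ : M → M → M) (x y : M) : M :=
  φ (φ x x) (φ x y) - φ x (φ (φ x x) y)

section

variable {n}

theorem jordanLawN_iff_jordanAssociator_eq_zero (φ : (Fin n → ℝ) → (Fin n → ℝ) → (Fin n → ℝ)) :
    JordanLawN n φ ↔ ∀ x y, jordanAssociator φ x y = 0 := by
  simp only [JordanLawN, jordanAssociator, sub_eq_zero]

theorem BilinLawN.exists_linearMap {φ : (Fin n → ℝ) → (Fin n → ℝ) → (Fin n → ℝ)}
    (h : BilinLawN n φ) :
    ∃ B : (Fin n → ℝ) →ₗ[ℝ] (Fin n → ℝ) →ₗ[ℝ] (Fin n → ℝ), (fun x y => B x y) = φ := by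
  obtain ⟨hl, hr⟩ := h
  have zero_left z : φ 0 z = 0 := by simpa using hl 1 0 0 z
  have zero_right z : φ z 0 = 0 := by simpa using hr 1 z 0 0
  refine ⟨LinearMap.mk₂ ℝ φ (fun x y z => by simpa using hl 1 x y z)
    (fun a x z => by simpa [zero_left] using hl a x 0 z)
    (fun x y z => by simpa using hr 1 x y z)
    (fun a x z => by simpa [zero_right] using hr a x z 0), rfl⟩

theorem jordanAssociator_smul_add_smul {φ₁ φ₂ : (Fin n → ℝ) → (Fin n → ℝ) → (Fin n → ℝ)}
    (hb₁ : BilinLawN n φ₁) (hb₂ : BilinLawN n φ₂) (l m : ℝ) (x y : Fin n → ℝ) :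
    jordanAssociator (fun x y => l • φ₁ x y + m • φ₂ x y) x y =
      l ^ 3 • jordanAssociator φ₁ x y + m ^ 3 • jordanAssociator φ₂ x y
        + (l ^ 2 * m) • deltaN n φ₁ φ₂ x y + (l * m ^ 2) • deltaN n φ₂ φ₁ x y := by
  obtain ⟨B₁, rfl⟩ := hb₁.exists_linearMap
  obtain ⟨B₂, rfl⟩ := hb₂.exists_linearMap
  simp only [jordanAssociator, deltaN, map_add, map_smul, LinearMap.add_apply,
    LinearMap.smul_apply]
  module

end

theorem stmt_13 (φ₁ φ₂ : (Fin n → ℝ) → (Fin n → ℝ) → (Fin n → ℝ))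
    (hb₁ : BilinLawN n φ₁) (hj₁ : JordanLawN n φ₁)
    (hb₂ : BilinLawN n φ₂) (hj₂ : JordanLawN n φ₂) :
    (∀ l m : ℝ, JordanLawN n (fun x y => l • φ₁ x y + m • φ₂ x y)) ↔
      ((∀ x y, deltaN n φ₁ φ₂ x y = 0) ∧ (∀ x y, deltaN n φ₂ φ₁ x y = 0)) := by
  rw [jordanLawN_iff_jordanAssociator_eq_zero] at hj₁ hj₂
  simp only [jordanLawN_iff_jordanAssociator_eq_zero, jordanAssociator_smul_add_smul hb₁ hb₂,
    hj₁, hj₂, smul_zero, zero_add]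
  calc (∀ l m : ℝ, ∀ x y, (l ^ 2 * m) • deltaN n φ₁ φ₂ x y + (l * m ^ 2) • deltaN n φ₂ φ₁ x y = 0)
      ↔ ∀ x y, ∀ l m : ℝ,
          (l ^ 2 * m) • deltaN n φ₁ φ₂ x y + (l * m ^ 2) • deltaN n φ₂ φ₁ x y = 0 :=
        ⟨fun h x y l m => h l m x y, fun h l m x y => h x y l m⟩
    _ ↔ ∀ x y, deltaN n φ₁ φ₂ x y = 0 ∧ deltaN n φ₂ φ₁ x y = 0 := by
        simp only [forall_smul_add_smul_eq_zero_iff]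
    _ ↔ _ := by simp only [forall_and]
end

section
/- The family of linear maps f_t on ℝ² defined by f_t(e₁) = e₁, f_t(e₂) = t·e₂ (t ≠ 0) contracts ψ₅ onto ψ₁: for all x, y ∈ ℝ², the limit as t → 0 of f_t⁻¹(ψ₅(f_t(x), f_t(y))) exists and equals ψ₁(x, y). -/
/-!
Conjugating ψ₅ by `f_t` multiplies the structure constant of `e₂∘e₂ = −e₁` by `t²` and leaves
the others unchanged, so the conjugated product depends polynomially on `t` and equals ψ₁ at
`t = 0`.
-/

open Filter Topology

/-- f_t(e₁) = e₁, f_t(e₂) = t·e₂. -/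
def ft (t : ℝ) (x : ℝ × ℝ) : ℝ × ℝ := (x.1, t * x.2)

/-- f_t⁻¹(e₁) = e₁, f_t⁻¹(e₂) = t⁻¹·e₂. -/
noncomputable def ftInv (t : ℝ) (x : ℝ × ℝ) : ℝ × ℝ := (x.1, x.2 / t)

theorem ftInv_psi5_ft {t : ℝ} (ht : t ≠ 0) (x y : ℝ × ℝ) :
    ftInv t (psi5 (ft t x) (ft t y)) = (x.1 * y.1 - t ^ 2 * (x.2 * y.2), x.1 * y.2 + x.2 * y.1) := by
  simp only [ftInv, psi5, ft, Prod.mk.injEq]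
  constructor
  · ring
  · field_simp

theorem stmt_14 (x y : ℝ × ℝ) :
    Tendsto (fun t : ℝ => ftInv t (psi5 (ft t x) (ft t y)))
      (𝓝[≠] 0) (𝓝 (psi1 x y)) := by
  have hcont : Continuous fun t : ℝ =>
      (x.1 * y.1 - t ^ 2 * (x.2 * y.2), x.1 * y.2 + x.2 * y.1) := by fun_prop
  have hlim := hcont.tendsto 0
  simp only [ne_eq, OfNat.ofNat_ne_zero, not_false_eq_true, zero_pow, zero_mul, sub_zero] at hlim
  refine (hlim.mono_left nhdsWithin_le_nhds).congr' ?_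
  filter_upwards [self_mem_nhdsWithin] with t ht
  exact (ftInv_psi5_ft ht x y).symm
end

section
/- The tangent space at ψ₀ to the GL(2,ℝ)-orbit of ψ₀ has dimension 4: the linear space { δ_{ψ₀}f : f ∈ gl(2,ℝ) }, where δ_{ψ₀}f(x,y) = ψ₀(f(x),y) + ψ₀(x,f(y)) − f(ψ₀(x,y)), has dimension 4 as a subspace of the space of symmetric bilinear maps ℝ²×ℝ² → ℝ². -/
/-- ψ₀ : e₁∘e₁ = e₁, e₂∘e₂ = e₁, e₁∘e₂ = e₂. -/
def psi0 (x y : ℝ × ℝ) : ℝ × ℝ := (x.1 * y.1 + x.2 * y.2, x.1 * y.2 + x.2 * y.1)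

/-- δ_{ψ₀}f (x,y) = ψ₀(f x, y) + ψ₀(x, f y) − f(ψ₀(x,y)). -/
def deltaPsi0 (f : (ℝ × ℝ) →ₗ[ℝ] (ℝ × ℝ)) (x y : ℝ × ℝ) : ℝ × ℝ :=
  psi0 (f x) y + psi0 x (f y) - f (psi0 x y)

noncomputable def Lmap : ((ℝ × ℝ) →ₗ[ℝ] (ℝ × ℝ)) →ₗ[ℝ] (ℝ × ℝ → ℝ × ℝ → ℝ × ℝ) where
  toFun := deltaPsi0
  map_add' f g := by
    funext x y
    simp only [deltaPsi0, psi0, LinearMap.add_apply, Pi.add_apply, Prod.fst_add, Prod.snd_add]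
    apply Prod.ext <;> simp <;> ring
  map_smul' c f := by
    funext x y
    simp only [deltaPsi0, psi0, LinearMap.smul_apply, Pi.smul_apply, Prod.smul_fst,
      Prod.smul_snd, RingHom.id_apply, smul_eq_mul]
    apply Prod.ext <;> simp <;> ring

lemma Lmap_inj : Function.Injective Lmap := by
  rw [← LinearMap.ker_eq_bot, LinearMap.ker_eq_bot']
  intro f hf
  have h1 := congrFun (congrFun hf (1, 0)) (1, 0)
  have h2 := congrFun (congrFun hf (0, 1)) (0, 1)
  simp only [Lmap, LinearMap.coe_mk, AddHom.coe_mk, deltaPsi0, psi0, Pi.zero_apply] at h1 h2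
  norm_num at h1 h2
  have he1 : f (1, 0) = 0 := h1
  have he2 : f (0, 1) = 0 := by
    rw [he1, sub_zero] at h2
    have hfst := congrArg Prod.fst h2
    have hsnd := congrArg Prod.snd h2
    simp at hfst hsnd
    apply Prod.ext <;> simp [hfst, hsnd]
  refine LinearMap.ext fun x => ?_
  have hx : x = x.1 • ((1 : ℝ), (0 : ℝ)) + x.2 • ((0 : ℝ), (1 : ℝ)) := by
    apply Prod.ext <;> simp
  rw [hx, map_add, map_smul, map_smul, he1, he2]
  simp

theorem stmt_18 :
    Module.finrank ℝ
      (Submodule.span ℝ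
        {g : ℝ × ℝ → ℝ × ℝ → ℝ × ℝ |
          ∃ f : (ℝ × ℝ) →ₗ[ℝ] (ℝ × ℝ), g = deltaPsi0 f}) = 4 := by
  have hset : {g : ℝ × ℝ → ℝ × ℝ → ℝ × ℝ |
      ∃ f : (ℝ × ℝ) →ₗ[ℝ] (ℝ × ℝ), g = deltaPsi0 f} = Set.range Lmap := by
    ext g
    simp [Lmap, eq_comm]
  rw [hset, ← LinearMap.coe_range, Submodule.span_eq,
    LinearMap.finrank_range_of_inj Lmap_inj, Module.finrank_linearMap]
  simp [Module.finrank_prod]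
end

section
/- The tangent space at ψ₄ to the GL(2,ℝ)-orbit of ψ₄ has dimension 2: the linear space { δ_{ψ₄}f : f ∈ gl(2,ℝ) }, where δ_{ψ₄}f(x,y) = ψ₄(f(x),y) + ψ₄(x,f(y)) − f(ψ₄(x,y)), has dimension 2 as a subspace of the space of symmetric bilinear maps ℝ²×ℝ² → ℝ². -/
/-- ψ₄ : e₁∘e₁ = e₁, e₂∘e₂ = 0, e₁∘e₂ = ½e₂. -/
noncomputable def psi4 (x y : ℝ × ℝ) : ℝ × ℝ :=
  (x.1 * y.1, (x.1 * y.2 + x.2 * y.1) / 2)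

/-- δ_{ψ₄}f (x,y) = ψ₄(f x, y) + ψ₄(x, f y) − f(ψ₄(x,y)). -/
noncomputable def deltaPsi4 (f : (ℝ × ℝ) →ₗ[ℝ] (ℝ × ℝ)) (x y : ℝ × ℝ) : ℝ × ℝ :=
  psi4 (f x) y + psi4 x (f y) - f (psi4 x y)

noncomputable def G2 : ℝ × ℝ → ℝ × ℝ → ℝ × ℝ :=
  fun x y => ((x.1 * y.2 + x.2 * y.1) / 2, x.2 * y.2)

lemma decomp_x (x : ℝ × ℝ) : x = x.1 • ((1:ℝ), (0:ℝ)) + x.2 • ((0:ℝ), (1:ℝ)) := by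
  ext <;> simp

lemma delta_eq (f : (ℝ × ℝ) →ₗ[ℝ] (ℝ × ℝ)) :
    deltaPsi4 f = (f (1,0)).1 • psi4 + (f (0,1)).1 • G2 := by
  funext x y
  have hf : ∀ z : ℝ × ℝ, f z = z.1 • f (1,0) + z.2 • f (0,1) := by
    intro z
    nth_rewrite 1 [decomp_x z]
    rw [map_add, map_smul, map_smul]
  rw [deltaPsi4, hf x, hf y, hf (psi4 x y)]
  simp only [psi4, G2, Pi.add_apply, Pi.smul_apply, Prod.smul_mk,
    Prod.mk_add_mk, Prod.smul_fst, Prod.smul_snd, smul_eq_mul]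
  ext <;> simp <;> ring

noncomputable def fG2 : (ℝ × ℝ) →ₗ[ℝ] (ℝ × ℝ) :=
  (LinearMap.inl ℝ ℝ ℝ).comp (LinearMap.snd ℝ ℝ ℝ)

lemma psi4_mem : psi4 ∈ {g : ℝ × ℝ → ℝ × ℝ → ℝ × ℝ |
    ∃ f : (ℝ × ℝ) →ₗ[ℝ] (ℝ × ℝ), g = deltaPsi4 f} := by
  refine ⟨LinearMap.id, ?_⟩
  rw [delta_eq]
  funext x y
  simp [G2, psi4]

lemma G2_mem : G2 ∈ {g : ℝ × ℝ → ℝ × ℝ → ℝ × ℝ |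
    ∃ f : (ℝ × ℝ) →ₗ[ℝ] (ℝ × ℝ), g = deltaPsi4 f} := by
  refine ⟨fG2, ?_⟩
  rw [delta_eq]
  funext x y
  simp [fG2, psi4, G2]

lemma span_eq : Submodule.span ℝ
      {g : ℝ × ℝ → ℝ × ℝ → ℝ × ℝ |
        ∃ f : (ℝ × ℝ) →ₗ[ℝ] (ℝ × ℝ), g = deltaPsi4 f}
    = Submodule.span ℝ (Set.range ![psi4, G2]) := by
  apply le_antisymm
  · rw [Submodule.span_le]
    rintro g ⟨f, rfl⟩
    rw [delta_eq]
    apply Submodule.add_mem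
    · exact Submodule.smul_mem _ _ (Submodule.subset_span ⟨0, rfl⟩)
    · exact Submodule.smul_mem _ _ (Submodule.subset_span ⟨1, rfl⟩)
  · rw [Submodule.span_le]
    rintro g ⟨i, rfl⟩
    fin_cases i
    · exact Submodule.subset_span psi4_mem
    · exact Submodule.subset_span G2_mem

lemma indep : LinearIndependent ℝ ![psi4, G2] := by
  rw [LinearIndependent.pair_iff]
  intro s t h
  have h1 := congrFun (congrFun h (1,0)) (1,0)
  have h2 := congrFun (congrFun h (0,1)) (0,1)
  simp [psi4, G2, Prod.ext_iff] at h1 h2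
  exact ⟨h1, h2⟩

theorem stmt_19 :
    Module.finrank ℝ
      (Submodule.span ℝ
        {g : ℝ × ℝ → ℝ × ℝ → ℝ × ℝ |
          ∃ f : (ℝ × ℝ) →ₗ[ℝ] (ℝ × ℝ), g = deltaPsi4 f}) = 2 := by
  rw [span_eq, finrank_span_eq_card indep]
  simp
end
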